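/- There is a bijection between semistandard Young tableaux of shape ν with entries in {1,…,n} and semistandard Young tableaux of shape ν̄ with entries in {1,…,n}, where ν sits in the n×m rectangle and ν̄ is its complementary partition; the bijection sends a tableau T to the tableau whose column j (read after 180° rotation) consists of the elements of {1,…,n} not appearing in column j of T. -/

import Mathlib

open YoungDiagram Finset

/-- The rectangular Young diagram with `m` rows and `n` columns. -/
def rect (m n : ℕ) : YoungDiagram where
  cells := Finset.range m ×ˢ Finset.range n
  isLowerSet := by
    rintro ⟨a1, a2⟩ ⟨b1, b2⟩ ⟨h1, h2⟩ hb
    simp only [Finset.coe_product, Set.mem_prod, Finset.mem_coe, Finset.mem_range] at *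
    exact ⟨lt_of_le_of_lt h1 hb.1, lt_of_le_of_lt h2 hb.2⟩

/-- The 180°-rotated complement of a Young diagram `μ` inside the rectangle with
`m` rows and `n` columns: its row lengths are `n - μ.rowLen (m-1-i)`. -/
def complement (m n : ℕ) (μ : YoungDiagram) : YoungDiagram where
  cells := (Finset.range m ×ˢ Finset.range n).filter fun p => p.2 < n - μ.rowLen (m - 1 - p.1)
  isLowerSet := by
    rintro ⟨a1, a2⟩ ⟨b1, b2⟩ ⟨h1, h2⟩ hb
    simp only [Finset.coe_filter, Set.mem_setOf_eq, Finset.mem_product, Finset.mem_range] at *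
    refine ⟨⟨lt_of_le_of_lt h1 hb.1.1, lt_of_le_of_lt h2 hb.1.2⟩, ?_⟩
    calc b2 ≤ a2 := h2
      _ < n - μ.rowLen (m - 1 - a1) := hb.2
      _ ≤ n - μ.rowLen (m - 1 - b1) :=
          Nat.sub_le_sub_left (μ.rowLen_anti _ _ (Nat.sub_le_sub_left h1 _)) n

/-- The hook length of the cell `c` in the Young diagram `μ` (arm + leg + 1). -/
def hookLength (μ : YoungDiagram) (c : ℕ × ℕ) : ℕ :=
  (μ.rowLen c.1 - c.2) + (μ.colLen c.2 - c.1) - 1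

/-- The product of all hook lengths of `μ`. -/
def hookProd (μ : YoungDiagram) : ℕ := ∏ c ∈ μ.cells, hookLength μ c

/-- The number of semistandard Young tableaux of shape `μ` with entries in `{0, …, k-1}`;
this equals `s_μ(1^k) = dim S^μ(ℂ^k)`. -/
noncomputable def ssytCount (μ : YoungDiagram) (k : ℕ) : ℕ :=
  Set.ncard {T : SemistandardYoungTableau μ | ∀ i j, (i, j) ∈ μ → T i j < k}

/-- `T : ℕ × ℕ → ℕ` is a standard Young tableau of shape `μ` (with entries `0, …, |μ|-1`):
it is a bijection from the cells of `μ` to `{0, …, |μ|-1}`, strictly increasing along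
rows and columns, and zero outside `μ`. -/
def IsSyt (μ : YoungDiagram) (T : ℕ × ℕ → ℕ) : Prop :=
  Set.BijOn T (μ.cells : Set (ℕ × ℕ)) (Finset.range μ.card : Set ℕ) ∧
  (∀ i j, (i, j + 1) ∈ μ → T (i, j) < T (i, j + 1)) ∧
  (∀ i j, (i + 1, j) ∈ μ → T (i, j) < T (i + 1, j)) ∧
  (∀ c, c ∉ μ → T c = 0)

/-- The number of standard Young tableaux of shape `μ`, i.e. `f^μ`. -/
noncomputable def sytCount (μ : YoungDiagram) : ℕ := Set.ncard {T | IsSyt μ T}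

namespace SSYTComp


/-- the `i`-th smallest element of a finset of naturals -/
def kth (s : Finset ℕ) (i : ℕ) : ℕ :=
  if h : i < s.card then s.orderEmbOfFin rfl ⟨i, h⟩ else 0

lemma kth_eq {s : Finset ℕ} {c : ℕ} (h : s.card = c) {i : ℕ} (hi : i < c) :
    kth s i = s.orderEmbOfFin h ⟨i, hi⟩ := by
  subst h
  unfold kth
  rw [dif_pos hi]

lemma kth_mem {s : Finset ℕ} {i : ℕ} (h : i < s.card) : kth s i ∈ s := by
  rw [kth_eq rfl h]
  exact s.orderEmbOfFin_mem rfl _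

lemma kth_lt_kth {s : Finset ℕ} {i j : ℕ} (hij : i < j) (hj : j < s.card) :
    kth s i < kth s j := by
  rw [kth_eq rfl (hij.trans hj), kth_eq rfl hj]
  exact (s.orderEmbOfFin rfl).strictMono (show (⟨i, hij.trans hj⟩ : Fin s.card) < ⟨j, hj⟩ from hij)

lemma kth_injOn (s : Finset ℕ) : Set.InjOn (kth s) ↑(range s.card) := by
  intro a ha b hb hab
  simp only [coe_range, Set.mem_Iio] at ha hb
  by_contra hne
  rcases Nat.lt_or_ge a b with h | h
  · exact absurd hab (Nat.ne_of_lt (kth_lt_kth h hb))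
  · have h2 : b < a := by omega
    exact absurd hab.symm (Nat.ne_of_lt (kth_lt_kth h2 ha))

lemma kth_image (s : Finset ℕ) : (range s.card).image (kth s) = s := by
  apply eq_of_subset_of_card_le
  · intro x hx
    simp only [mem_image, mem_range] at hx
    obtain ⟨i, hi, rfl⟩ := hx
    exact kth_mem hi
  · rw [card_image_of_injOn (kth_injOn s), card_range]

lemma kth_image_eq {c : ℕ} {f : ℕ → ℕ} (hf : ∀ i j, i < j → j < c → f i < f j)
    {i : ℕ} (hi : i < c) : kth ((range c).image f) i = f i := by
  have hinj : Set.InjOn f ↑(range c) := by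
    intro a ha b hb hab
    simp only [coe_range, Set.mem_Iio] at ha hb
    by_contra hne
    rcases Nat.lt_or_ge a b with h | h
    · exact absurd hab (Nat.ne_of_lt (hf a b h hb))
    · have h2 : b < a := by omega
      exact absurd hab.symm (Nat.ne_of_lt (hf b a h2 ha))
  have hcard : ((range c).image f).card = c := by
    rw [card_image_of_injOn hinj, card_range]
  have hmem : ∀ x : Fin c, f x ∈ (range c).image f := fun x =>
    mem_image_of_mem f (mem_range.mpr x.2)
  have hmono : StrictMono (fun x : Fin c => f x) := fun a b h => hf a b h b.2
  have hu := Finset.orderEmbOfFin_unique hcard hmem hmono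
  calc kth ((range c).image f) i = ((range c).image f).orderEmbOfFin hcard ⟨i, hi⟩ :=
        kth_eq hcard hi
    _ = f i := by rw [← hu]

lemma kth_le_iff {s : Finset ℕ} {i t : ℕ} (hi : i < s.card) :
    kth s i ≤ t ↔ i < (s.filter (· ≤ t)).card := by
  constructor
  · intro h
    have hsub : (range (i + 1)).image (kth s) ⊆ s.filter (· ≤ t) := by
      intro x hx
      simp only [mem_image, mem_range] at hx
      obtain ⟨k, hk, rfl⟩ := hx
      have hks : k < s.card := by omega
      have hle : kth s k ≤ kth s i := by
        rcases Nat.lt_or_ge k i with h2 | h2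
        · exact (kth_lt_kth h2 hi).le
        · have : k = i := by omega
          rw [this]
      exact mem_filter.mpr ⟨kth_mem hks, hle.trans h⟩
    have hinj : Set.InjOn (kth s) ↑(range (i + 1)) := by
      apply (kth_injOn s).mono
      intro x hx
      simp only [coe_range, Set.mem_Iio] at hx ⊢
      omega
    have h1 : ((range (i + 1)).image (kth s)).card = i + 1 := by
      rw [card_image_of_injOn hinj, card_range]
    have := card_le_card hsub
    omega
  · intro h
    by_contra hlt
    push_neg at hlt
    have hsub : s.filter (· ≤ t) ⊆ (range i).image (kth s) := by
      intro x hx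
      rw [mem_filter] at hx
      have hxs : x ∈ (range s.card).image (kth s) := by rw [kth_image]; exact hx.1
      simp only [mem_image, mem_range] at hxs ⊢
      obtain ⟨k, hk, rfl⟩ := hxs
      refine ⟨k, ?_, rfl⟩
      by_contra hik
      push_neg at hik
      have h3 : kth s i ≤ kth s k := by
        rcases eq_or_lt_of_le hik with h2 | h2
        · rw [h2]
        · exact (kth_lt_kth h2 hk).le
      have := hx.2
      omega
    have h4 := card_le_card hsub
    have h5 : ((range i).image (kth s)).card ≤ i := le_trans card_image_le (by rw [card_range])
    omega

lemma filter_compl_card {n t : ℕ} (S : Finset ℕ) (ht : t < n) :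
    ((range n \ S).filter (· ≤ t)).card = t + 1 - (S.filter (· ≤ t)).card := by
  have h1 : (range n \ S).filter (· ≤ t) = range (t + 1) \ S.filter (· ≤ t) := by
    ext x
    simp only [mem_filter, mem_sdiff, mem_range]
    constructor
    · rintro ⟨⟨-, hxS⟩, hxt⟩
      exact ⟨by omega, fun h => hxS h.1⟩
    · rintro ⟨hxt, h⟩
      exact ⟨⟨by omega, fun hxS => h ⟨hxS, by omega⟩⟩, by omega⟩
  rw [h1, card_sdiff_of_subset, card_range]
  intro x hx
  rw [mem_filter] at hx
  rw [mem_range]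
  omega

lemma comp_le {n : ℕ} {A B : Finset ℕ} (hA : A ⊆ range n) (hB : B ⊆ range n)
    (hcard : B.card ≤ A.card) (hk : ∀ k, k < B.card → kth A k ≤ kth B k)
    {i : ℕ} (hi : i < n - A.card) :
    kth (range n \ B) i ≤ kth (range n \ A) i := by
  have hAc : (range n \ A).card = n - A.card := by rw [card_sdiff_of_subset hA, card_range]
  have hBc : (range n \ B).card = n - B.card := by rw [card_sdiff_of_subset hB, card_range]
  set t := kth (range n \ A) i with ht
  have htmem : t ∈ range n \ A := kth_mem (by omega)
  have htn : t < n := mem_range.mp (mem_sdiff.mp htmem).1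
  have key : (B.filter (· ≤ t)).card ≤ (A.filter (· ≤ t)).card := by
    have hBim : B.filter (· ≤ t) =
        ((range B.card).filter (fun k => kth B k ≤ t)).image (kth B) := by
      conv_lhs => rw [← kth_image B]
      rw [filter_image]
    have hKinj : Set.InjOn (kth B) ↑((range B.card).filter (fun k => kth B k ≤ t)) := by
      apply (kth_injOn B).mono
      intro x hx
      simp only [coe_filter, Set.mem_setOf_eq, mem_range, coe_range, Set.mem_Iio] at hx ⊢
      exact hx.1
    have hKcard : (B.filter (· ≤ t)).card =
        ((range B.card).filter (fun k => kth B k ≤ t)).card := by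
      rw [hBim, card_image_of_injOn hKinj]
    have hsub : ((range B.card).filter (fun k => kth B k ≤ t)).image (kth A) ⊆
        A.filter (· ≤ t) := by
      intro x hx
      simp only [mem_image, mem_filter, mem_range] at hx
      obtain ⟨k, ⟨hk1, hk2⟩, rfl⟩ := hx
      exact mem_filter.mpr ⟨kth_mem (by omega), (hk k hk1).trans hk2⟩
    have hAinj : Set.InjOn (kth A) ↑((range B.card).filter (fun k => kth B k ≤ t)) := by
      apply (kth_injOn A).mono
      intro x hx
      simp only [coe_filter, Set.mem_setOf_eq, mem_range, coe_range, Set.mem_Iio] at hx ⊢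
      omega
    calc (B.filter (· ≤ t)).card
        = (((range B.card).filter (fun k => kth B k ≤ t)).image (kth A)).card := by
          rw [hKcard, card_image_of_injOn hAinj]
      _ ≤ (A.filter (· ≤ t)).card := card_le_card hsub
  have h1 : i < ((range n \ A).filter (· ≤ t)).card := (kth_le_iff (by omega)).1 le_rfl
  rw [filter_compl_card A htn] at h1
  refine (kth_le_iff (show i < (range n \ B).card by omega)).2 ?_
  rw [filter_compl_card B htn]
  omega



variable {n m : ℕ} {μ : YoungDiagram}

lemma mem_rect {i j : ℕ} : (i, j) ∈ rect n m ↔ i < n ∧ j < m := by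
  simp [rect, ← YoungDiagram.mem_cells, Finset.mem_product]

lemma rowLen_le (hμ : μ ≤ rect n m) (a : ℕ) : μ.rowLen a ≤ m := by
  by_contra h
  push_neg at h
  have : (a, m) ∈ μ := mem_iff_lt_rowLen.mpr h
  have := hμ this
  rw [mem_rect] at this
  omega

lemma colLen_le (hμ : μ ≤ rect n m) (a : ℕ) : μ.colLen a ≤ n := by
  by_contra h
  push_neg at h
  have : (n, a) ∈ μ := mem_iff_lt_colLen.mpr h
  have := hμ this
  rw [mem_rect] at this
  omega

lemma mem_complement (hμ : μ ≤ rect n m) {i j : ℕ} :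
    (i, j) ∈ complement n m μ ↔ i < n ∧ j < m ∧ (n - 1 - i, m - 1 - j) ∉ μ := by
  have hr := rowLen_le hμ (n - 1 - i)
  rw [← YoungDiagram.mem_cells]
  show (i, j) ∈ Finset.filter _ _ ↔ _
  rw [Finset.mem_filter, Finset.mem_product, Finset.mem_range, Finset.mem_range]
  rw [mem_iff_lt_rowLen]
  dsimp only
  omega

lemma complement_le_rect : complement n m μ ≤ rect n m := by
  rw [← YoungDiagram.cells_subset_iff]
  exact Finset.filter_subset _ _

lemma colLen_complement (hμ : μ ≤ rect n m) {j : ℕ} (hj : j < m) :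
    (complement n m μ).colLen j = n - μ.colLen (m - 1 - j) := by
  have hc := colLen_le hμ (m - 1 - j)
  have key : ∀ i, (i, j) ∈ complement n m μ ↔ i < n - μ.colLen (m - 1 - j) := by
    intro i
    rw [mem_complement hμ, mem_iff_lt_colLen]
    omega
  have h1 := (mem_iff_lt_colLen.symm.trans (key ((complement n m μ).colLen j)))
  have h2 := (mem_iff_lt_colLen.symm.trans (key (n - μ.colLen (m - 1 - j))))
  omega

lemma complement_complement (hμ : μ ≤ rect n m) :
    complement n m (complement n m μ) = μ := by
  apply YoungDiagram.ext
  ext ⟨i, j⟩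
  rw [YoungDiagram.mem_cells, YoungDiagram.mem_cells,
    mem_complement (complement_le_rect), mem_complement hμ]
  constructor
  · rintro ⟨hi, hj, h⟩
    by_contra hm
    exact h ⟨by omega, by omega, by
      have e1 : n - 1 - (n - 1 - i) = i := by omega
      have e2 : m - 1 - (m - 1 - j) = j := by omega
      rw [e1, e2]; exact hm⟩
  · intro hm
    have hij := hμ hm
    rw [mem_rect] at hij
    refine ⟨hij.1, hij.2, ?_⟩
    rintro ⟨-, -, h⟩
    have e1 : n - 1 - (n - 1 - i) = i := by omega
    have e2 : m - 1 - (m - 1 - j) = j := by omega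
    rw [e1, e2] at h
    exact h hm



variable {n m : ℕ} {μ : YoungDiagram}

/-- The set of entries of column `c` of a filling `f` of `μ`. -/
def colSet (μ : YoungDiagram) (f : ℕ → ℕ → ℕ) (c : ℕ) : Finset ℕ :=
  (range (μ.colLen c)).image (fun i => f i c)

/-- The complement filling. -/
def compFun (n m : ℕ) (μ : YoungDiagram) (f : ℕ → ℕ → ℕ) : ℕ → ℕ → ℕ :=
  fun i j => if (i, j) ∈ complement n m μ then kth (range n \ colSet μ f (m - 1 - j)) i else 0

lemma compFun_apply (n m : ℕ) (μ : YoungDiagram) (f : ℕ → ℕ → ℕ) (i j : ℕ) :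
    compFun n m μ f i j =
      if (i, j) ∈ complement n m μ then kth (range n \ colSet μ f (m - 1 - j)) i else 0 := rfl

lemma colSet_card (T : SemistandardYoungTableau μ) (c : ℕ) :
    (colSet μ ⇑T c).card = μ.colLen c := by
  rw [colSet, card_image_of_injOn, card_range]
  intro a ha b hb hab
  simp only [coe_range, Set.mem_Iio] at ha hb
  by_contra hne
  rcases Nat.lt_or_ge a b with h | h
  · exact absurd hab (Nat.ne_of_lt (T.col_strict h (mem_iff_lt_colLen.mpr hb)))
  · have h2 : b < a := by omega
    exact absurd hab.symm (Nat.ne_of_lt (T.col_strict h2 (mem_iff_lt_colLen.mpr ha)))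

lemma kth_colSet (T : SemistandardYoungTableau μ) {c i : ℕ} (hi : i < μ.colLen c) :
    kth (colSet μ ⇑T c) i = T i c :=
  kth_image_eq (fun _ _ h h' => T.col_strict h (mem_iff_lt_colLen.mpr h')) hi

lemma colSet_subset (T : SemistandardYoungTableau μ)
    (hT : ∀ i j, (i, j) ∈ μ → T i j < n) (c : ℕ) : colSet μ ⇑T c ⊆ range n := by
  intro x hx
  simp only [colSet, mem_image, mem_range] at hx
  obtain ⟨i, hi, rfl⟩ := hx
  exact mem_range.mpr (hT i c (mem_iff_lt_colLen.mpr hi))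

lemma card_sdiff_colSet (T : SemistandardYoungTableau μ)
    (hT : ∀ i j, (i, j) ∈ μ → T i j < n) (hμ : μ ≤ rect n m) {j : ℕ} (hj : j < m) :
    (range n \ colSet μ ⇑T (m - 1 - j)).card = (complement n m μ).colLen j := by
  rw [card_sdiff_of_subset (colSet_subset T hT _), card_range, colSet_card, colLen_complement hμ hj]

/-- The complement tableau. -/
def PhiT (T : SemistandardYoungTableau μ) (hT : ∀ i j, (i, j) ∈ μ → T i j < n)
    (hμ : μ ≤ rect n m) : SemistandardYoungTableau (complement n m μ) where
  entry := compFun n m μ ⇑T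
  row_weak' := by
    intro i j1 j2 hj hcell
    have hcell1 : (i, j1) ∈ complement n m μ :=
      (complement n m μ).up_left_mem le_rfl hj.le hcell
    have hj2 : j2 < m := ((mem_complement hμ).mp hcell).2.1
    simp only [compFun_apply]
    rw [if_pos hcell, if_pos hcell1]
    have hc : m - 1 - j2 ≤ m - 1 - j1 := by omega
    apply comp_le (colSet_subset T hT (m - 1 - j2)) (colSet_subset T hT (m - 1 - j1))
    · rw [colSet_card, colSet_card]
      exact μ.colLen_anti _ _ hc
    · intro k hk
      rw [colSet_card] at hk
      have hk' : k < μ.colLen (m - 1 - j2) := lt_of_lt_of_le hk (μ.colLen_anti _ _ hc)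
      rw [kth_colSet T hk', kth_colSet T hk]
      exact T.row_weak_of_le hc (mem_iff_lt_colLen.mpr hk)
    · rw [colSet_card]
      have h2 := mem_iff_lt_colLen.mp hcell
      rwa [colLen_complement hμ hj2] at h2
  col_strict' := by
    intro i1 i2 j hi hcell
    have hcell1 : (i1, j) ∈ complement n m μ :=
      (complement n m μ).up_left_mem hi.le le_rfl hcell
    have hj : j < m := ((mem_complement hμ).mp hcell).2.1
    simp only [compFun_apply]
    rw [if_pos hcell, if_pos hcell1]
    exact kth_lt_kth hi
      (by rw [card_sdiff_colSet T hT hμ hj]; exact mem_iff_lt_colLen.mp hcell)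
  zeros' := by
    intro i j h
    rw [compFun_apply, if_neg h]

lemma PhiT_bound (T : SemistandardYoungTableau μ) (hT : ∀ i j, (i, j) ∈ μ → T i j < n)
    (hμ : μ ≤ rect n m) :
    ∀ i j, (i, j) ∈ complement n m μ → (PhiT T hT hμ) i j < n := by
  intro i j hij
  have hj : j < m := ((mem_complement hμ).mp hij).2.1
  show compFun n m μ ⇑T i j < n
  rw [compFun_apply, if_pos hij]
  have hi : i < (range n \ colSet μ ⇑T (m - 1 - j)).card := by
    rw [card_sdiff_colSet T hT hμ hj]
    exact mem_iff_lt_colLen.mp hij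
  exact mem_range.mp (Finset.mem_sdiff.mp (kth_mem hi)).1

lemma image_compFun (T : SemistandardYoungTableau μ) (hT : ∀ i j, (i, j) ∈ μ → T i j < n)
    (hμ : μ ≤ rect n m) {j : ℕ} (hj : j < m) :
    (range ((complement n m μ).colLen j)).image (fun i => compFun n m μ (⇑T) i j)
      = range n \ colSet μ ⇑T (m - 1 - j) := by
  have h1 : (range ((complement n m μ).colLen j)).image (fun i => compFun n m μ (⇑T) i j)
      = (range ((complement n m μ).colLen j)).image
          (kth (range n \ colSet μ ⇑T (m - 1 - j))) := by
    apply Finset.image_congr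
    intro i hi
    rw [Finset.mem_coe, Finset.mem_range] at hi
    show compFun n m μ (⇑T) i j = kth (range n \ colSet μ (⇑T) (m - 1 - j)) i
    rw [compFun_apply, if_pos (mem_iff_lt_colLen.mpr hi)]
  rw [h1, ← card_sdiff_colSet T hT hμ hj]
  exact kth_image _

lemma compFun_compFun (T : SemistandardYoungTableau μ)
    (hT : ∀ i j, (i, j) ∈ μ → T i j < n) (hμ : μ ≤ rect n m) :
    compFun n m (complement n m μ) (compFun n m μ ⇑T) = ⇑T := by
  funext i j
  rw [compFun_apply, complement_complement hμ]
  by_cases hmem : (i, j) ∈ μ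
  · rw [if_pos hmem]
    have hij := hμ hmem
    rw [mem_rect] at hij
    have hj : j < m := hij.2
    have hcs : colSet (complement n m μ) (compFun n m μ ⇑T) (m - 1 - j)
        = range n \ colSet μ ⇑T j := by
      have h2 := image_compFun T hT hμ (j := m - 1 - j) (by omega)
      rw [show m - 1 - (m - 1 - j) = j by omega] at h2
      exact h2
    rw [hcs, Finset.sdiff_sdiff_eq_self (colSet_subset T hT j)]
    exact kth_colSet T (mem_iff_lt_colLen.mp hmem)
  · rw [if_neg hmem]
    exact (T.zeros hmem).symm

/-- Transport of an SSYT along an equality of shapes. -/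
def castT {μ1 μ2 : YoungDiagram} (h : μ1 = μ2) (T : SemistandardYoungTableau μ1) :
    SemistandardYoungTableau μ2 := h ▸ T

lemma coe_castT {μ1 μ2 : YoungDiagram} (h : μ1 = μ2) (T : SemistandardYoungTableau μ1) :
    ⇑(castT h T) = ⇑T := by subst h; rfl

/-- The complementation equivalence. -/
noncomputable def PhiEquiv (hμ : μ ≤ rect n m) :
    {T : SemistandardYoungTableau μ // ∀ i j, (i, j) ∈ μ → T i j < n} ≃
      {T : SemistandardYoungTableau (complement n m μ) //
        ∀ i j, (i, j) ∈ complement n m μ → T i j < n} where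
  toFun T := ⟨PhiT T.1 T.2 hμ, PhiT_bound T.1 T.2 hμ⟩
  invFun T := ⟨castT (complement_complement hμ)
      (PhiT T.1 T.2 complement_le_rect), by
    intro i j hij
    have h2 : (i, j) ∈ complement n m (complement n m μ) := by
      rw [complement_complement hμ]; exact hij
    have h3 := PhiT_bound T.1 T.2 complement_le_rect i j h2
    rw [coe_castT]
    exact h3⟩
  left_inv T := by
    apply Subtype.ext
    apply SemistandardYoungTableau.ext
    intro i j
    rw [coe_castT]
    exact congrFun (congrFun (compFun_compFun T.1 T.2 hμ) i) j
  right_inv T := by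
    apply Subtype.ext
    apply SemistandardYoungTableau.ext
    intro i j
    show compFun n m μ
      (⇑(castT (complement_complement hμ) (PhiT T.1 T.2 complement_le_rect))) i j = T.1 i j
    rw [coe_castT]
    have hdd := compFun_compFun (μ := complement n m μ) T.1 T.2 complement_le_rect
    rw [complement_complement hμ] at hdd
    exact congrFun (congrFun hdd i) j


end SSYTComp

/-- a bijection between SSYT of shape `ν` and of shape `ν̄` with entries in
`{0,…,n-1}`, such that (after the 180° rotation) the set of entries of column `j` of the
image tableau is the complement of the set of entries of the corresponding column
`m-1-j` of the original tableau. -/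
theorem ssyt_complement_bijection (n m : ℕ) (ν : YoungDiagram) (hν : ν ≤ rect n m) :
    ∃ e : {T : SemistandardYoungTableau ν // ∀ i j, (i, j) ∈ ν → T i j < n} ≃
        {T : SemistandardYoungTableau (complement n m ν) //
          ∀ i j, (i, j) ∈ complement n m ν → T i j < n},
      ∀ (T : {T : SemistandardYoungTableau ν // ∀ i j, (i, j) ∈ ν → T i j < n})
        (j : ℕ), j < m →
        (Finset.range ((complement n m ν).colLen j)).image (fun i => (e T).1 i j)
          = Finset.range n \
            (Finset.range (ν.colLen (m - 1 - j))).image (fun i => T.1 i (m - 1 - j)) := by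
  refine ⟨SSYTComp.PhiEquiv hν, ?_⟩
  intro T j hj
  exact SSYTComp.image_compFun T.1 T.2 hν hj
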